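/- For any one-pair Rabin automaton R, the relation {(t,t') ∈ Σ^ω × Σ^ω | val(run of R on t) > val(run of R on t')} is ω-regular (recognizable by an ω-automaton reading the merge of t and t'). -/

import Mathlib

open scoped Classical

/-- The run of a deterministic automaton from `q0` on an infinite word. -/
def runOn {Q σ : Type*} (δ : Q → σ → Q) (q0 : Q) (w : ℕ → σ) : ℕ → Q
  | 0 => q0
  | n + 1 => δ (runOn δ q0 w n) (w n)

/-- `firstF(κ)`: position of the first visit of the run `κ` to `F`
(`∞` if `κ` never visits `F`). -/
noncomputable def firstF {Q : Type*} (F : Set Q) (κ : ℕ → Q) : ℕ∞ :=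
  sInf ((fun n : ℕ => (n : ℕ∞)) '' {n | κ n ∈ F})

/-- `lastB(κ)`: position of the last visit of the run `κ` to `B`
(`⊥` if there is none, `∞` if there are infinitely many). -/
noncomputable def lastB {Q : Type*} (B : Set Q) (κ : ℕ → Q) : WithBot ℕ∞ :=
  sSup ((fun n : ℕ => ((n : ℕ∞) : WithBot ℕ∞)) '' {n | κ n ∈ B})

/-- `val(κ) = firstF(κ)` if `lastB(κ) = ⊥`, and `max{lastB(κ), firstF(κ)}`
otherwise; in particular `val(κ) = ∞` if `κ` visits `B` infinitely often or
never visits `F`. -/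
noncomputable def runVal {Q : Type*} (B F : Set Q) (κ : ℕ → Q) : WithBot ℕ∞ :=
  if {n | κ n ∈ B} = ∅ then (firstF F κ : WithBot ℕ∞)
  else max (lastB B κ) ((firstF F κ : WithBot ℕ∞))

/-! Since `val` never takes the value `⊥`, `val κ' < val κ` holds iff `val κ' ≤ N < val κ` for
some `N : ℕ`. Unfolding `val ≤ N`, this says: `κ'` visits `F` by time `N` and avoids `B` after
`N`, while `κ` avoids `F` up to `N` or visits `B` after `N`. A Büchi automaton running alongside
the two deterministic runs checks this by guessing `N`: up to `N` it records whether each run has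
met `F`, after `N` it forbids `κ'` to enter `B` and waits until the condition on `κ` is
confirmed. -/

section RunValue

variable {Q : Type*} (B F : Set Q) (κ : ℕ → Q)

lemma firstF_le_coe_iff (N : ℕ) : firstF F κ ≤ N ↔ ∃ m ≤ N, κ m ∈ F := by
  rw [← ENat.lt_add_one_iff (ENat.natCast_ne_top N), firstF, sInf_lt_iff]
  simp [ENat.lt_add_one_iff, and_comm]

lemma lastB_le_coe_iff (N : ℕ) :
    lastB B κ ≤ ((N : ℕ∞) : WithBot ℕ∞) ↔ ∀ m, κ m ∈ B → m ≤ N := by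
  simp [lastB, sSup_le_iff]

lemma runVal_le_coe_iff (N : ℕ) :
    runVal B F κ ≤ ((N : ℕ∞) : WithBot ℕ∞) ↔ (∃ m ≤ N, κ m ∈ F) ∧ ∀ m, κ m ∈ B → m ≤ N := by
  unfold runVal
  split_ifs with h
  · have hB : ∀ m, κ m ∈ B → m ≤ N := fun m hm => absurd hm (Set.eq_empty_iff_forall_notMem.mp h m)
    rw [WithBot.coe_le_coe, firstF_le_coe_iff]
    exact (and_iff_left hB).symm
  · rw [max_le_iff, WithBot.coe_le_coe, firstF_le_coe_iff, lastB_le_coe_iff, and_comm]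

lemma runVal_ne_bot : runVal B F κ ≠ ⊥ := by
  unfold runVal
  split_ifs <;> simp

end RunValue

lemma WithBot.lt_iff_exists_coe_nat_between {x y : WithBot ℕ∞} (hx : x ≠ ⊥) :
    x < y ↔ ∃ N : ℕ, x ≤ ((N : ℕ∞) : WithBot ℕ∞) ∧ ((N : ℕ∞) : WithBot ℕ∞) < y := by
  refine ⟨fun hxy => ?_, fun ⟨N, hxN, hNy⟩ => hxN.trans_lt hNy⟩
  induction x using WithBot.recBotCoe with
  | bot => exact absurd rfl hx
  | coe a =>
    induction a using ENat.recTopCoe with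
    | top => exact absurd hxy (not_lt_of_ge le_top)
    | coe N => exact ⟨N, le_rfl, hxy⟩

theorem runVal_lt_runVal_iff {Q : Type*} (B F : Set Q) (κ κ' : ℕ → Q) :
    runVal B F κ' < runVal B F κ ↔ ∃ N : ℕ, ((∃ m ≤ N, κ' m ∈ F) ∧ ∀ m, κ' m ∈ B → m ≤ N) ∧
      ¬((∃ m ≤ N, κ m ∈ F) ∧ ∀ m, κ m ∈ B → m ≤ N) := by
  simp only [WithBot.lt_iff_exists_coe_nat_between (runVal_ne_bot B F κ'), ← not_le,
    runVal_le_coe_iff]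

lemma runOn_prod {Q₁ Q₂ α₁ α₂ : Type*} (δ₁ : Q₁ → α₁ → Q₁) (δ₂ : Q₂ → α₂ → Q₂) (q₁ : Q₁)
    (q₂ : Q₂) (w : ℕ → α₁ × α₂) (n : ℕ) :
    runOn (fun p a => (δ₁ p.1 a.1, δ₂ p.2 a.2)) (q₁, q₂) w n =
      (runOn δ₁ q₁ (fun n => (w n).1) n, runOn δ₂ q₂ (fun n => (w n).2) n) := by
  induction n with
  | zero => rfl
  | succ n ih => simp only [runOn, ih]

namespace NFA

variable {α σ τ Q : Type*}

/-- A Büchi automaton carries the same data as an `NFA`; only its acceptance condition differs. -/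
def BuchiAccepts (M : NFA α σ) (w : ℕ → α) : Prop :=
  ∃ ρ : ℕ → σ, ρ 0 ∈ M.start ∧ (∀ n, ρ (n + 1) ∈ M.step (ρ n) (w n)) ∧
    {n | ρ n ∈ M.accept}.Infinite

def reindex (M : NFA α σ) (e : σ ≃ τ) : NFA α τ where
  step t a := e.symm ⁻¹' M.step (e.symm t) a
  start := e.symm ⁻¹' M.start
  accept := e.symm ⁻¹' M.accept

theorem buchiAccepts_reindex (M : NFA α σ) (e : σ ≃ τ) (w : ℕ → α) :
    (M.reindex e).BuchiAccepts w ↔ M.BuchiAccepts w := by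
  constructor
  · rintro ⟨ρ, h0, hstep, hacc⟩
    exact ⟨e.symm ∘ ρ, h0, hstep, hacc⟩
  · rintro ⟨ρ, h0, hstep, hacc⟩
    refine ⟨e ∘ ρ, ?_, fun n => ?_, ?_⟩
    · simpa [reindex] using h0
    · simpa [reindex] using hstep n
    · simpa [reindex] using hacc

/-- `M` reading the sequence of states of the deterministic automaton `(δ, q0)`. -/
def onRun (M : NFA Q σ) (δ : Q → α → Q) (q0 : Q) : NFA α (Q × σ) where
  step p a := {p' | p'.1 = δ p.1 a ∧ p'.2 ∈ M.step p.2 p.1}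
  start := {p | p.1 = q0 ∧ p.2 ∈ M.start}
  accept := {p | p.2 ∈ M.accept}

theorem buchiAccepts_onRun_iff (M : NFA Q σ) (δ : Q → α → Q) (q0 : Q) (w : ℕ → α) :
    (M.onRun δ q0).BuchiAccepts w ↔ M.BuchiAccepts (runOn δ q0 w) := by
  constructor
  · rintro ⟨ρ, h0, hstep, hacc⟩
    have hfst : ∀ n, (ρ n).1 = runOn δ q0 w n := by
      intro n
      induction n with
      | zero => exact h0.1
      | succ n ih => rw [(hstep n).1, ih]; rfl
    refine ⟨fun n => (ρ n).2, h0.2, fun n => ?_, hacc⟩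
    simpa only [hfst] using (hstep n).2
  · rintro ⟨φ, h0, hstep, hacc⟩
    exact ⟨fun n => (runOn δ q0 w n, φ n), ⟨rfl, h0⟩, fun n => ⟨rfl, hstep n⟩, hacc⟩

end NFA

/-- While in `scan f f'`, the flags record whether the first, resp. second, run has visited `F`
at an earlier position; `wait` and `done` come after the guessed `N`, `done` once the first run
is known to have value `> N`. -/
inductive ValPhase
  | scan (f f' : Bool)
  | wait
  | done
  deriving Fintype

namespace ValPhase

variable {Q : Type*} (B F : Set Q)

def IsScan : ValPhase → Prop
  | scan _ _ => True
  | _ => False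

lemma isScan_iff {s : ValPhase} : IsScan s ↔ ∃ f f', s = scan f f' := by
  cases s <;> simp [IsScan]

inductive Step : ValPhase → Q × Q → ValPhase → Prop
  | scan_scan (f f' : Bool) (x : Q × Q) :
      Step (scan f f') x (scan (f || decide (x.1 ∈ F)) (f' || decide (x.2 ∈ F)))
  | scan_wait (f f' : Bool) (x : Q × Q) : (f' = true ∨ x.2 ∈ F) → Step (scan f f') x wait
  | scan_done (f' : Bool) (x : Q × Q) :
      (f' = true ∨ x.2 ∈ F) → x.1 ∉ F → Step (scan false f') x done
  | wait_wait (x : Q × Q) : x.2 ∉ B → Step wait x wait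
  | wait_done (x : Q × Q) : x.2 ∉ B → x.1 ∈ B → Step wait x done
  | done_done (x : Q × Q) : x.2 ∉ B → Step done x done

variable {B F}

lemma Step.exists_of_scan {s : ValPhase} {x : Q × Q} {f f' : Bool}
    (h : Step B F s x (scan f f')) : ∃ g g', s = scan g g' ∧
      f = (g || decide (x.1 ∈ F)) ∧ f' = (g' || decide (x.2 ∈ F)) := by
  cases h
  exact ⟨_, _, rfl, rfl, rfl⟩

lemma Step.not_isScan {s t : ValPhase} {x : Q × Q} (h : Step B F s x t) (hs : ¬IsScan s) :
    ¬IsScan t ∧ x.2 ∉ B := by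
  cases h <;> simp_all [IsScan]

lemma Step.eq_wait_or_mem_of_wait {t : ValPhase} {x : Q × Q} (h : Step B F wait x t) :
    t = wait ∨ x.1 ∈ B := by
  cases h <;> simp_all

lemma Step.of_scan_of_not_isScan {f f' : Bool} {t : ValPhase} {x : Q × Q}
    (h : Step B F (scan f f') x t) (ht : ¬IsScan t) :
    (f' = true ∨ x.2 ∈ F) ∧ (t = wait ∨ f = false ∧ x.1 ∉ F) := by
  cases h <;> simp_all [IsScan]

section Run

variable {u : ℕ → Q × Q} {φ : ℕ → ValPhase} (hstep : ∀ n, Step B F (φ n) (u n) (φ (n + 1)))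
include hstep

lemma flags_of_run (h0 : φ 0 = scan false false) {n : ℕ} {f f' : Bool} (h : φ n = scan f f') :
    (f = true ↔ ∃ m < n, (u m).1 ∈ F) ∧ (f' = true ↔ ∃ m < n, (u m).2 ∈ F) := by
  induction n generalizing f f' with
  | zero =>
    obtain ⟨rfl, rfl⟩ := scan.inj (h0.symm.trans h)
    simp
  | succ n ih =>
    obtain ⟨g, g', hg, rfl, rfl⟩ := (h ▸ hstep n).exists_of_scan
    obtain ⟨ih₁, ih₂⟩ := ih hg
    simp only [Bool.or_eq_true, decide_eq_true_eq, ih₁, ih₂, Nat.exists_lt_succ_right, and_self]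

lemma not_isScan_of_run {n : ℕ} (hn : ¬IsScan (φ n)) :
    ∀ m ≥ n, ¬IsScan (φ m) ∧ (u m).2 ∉ B := by
  have h : ∀ m ≥ n, ¬IsScan (φ m) := by
    intro m hm
    induction m, hm using Nat.le_induction with
    | base => exact hn
    | succ m _ ih => exact ((hstep m).not_isScan ih).1
  exact fun m hm => ⟨h m hm, ((hstep m).not_isScan (h m hm)).2⟩

lemma wait_or_mem_of_run {n : ℕ} (hn : φ n = wait) :
    ∀ m ≥ n, φ m = wait ∨ ∃ k ≥ n, (u k).1 ∈ B := by
  intro m hm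
  induction m, hm using Nat.le_induction with
  | base => exact Or.inl hn
  | succ m hm ih =>
    rcases ih with hm' | hk
    · rcases (hm' ▸ hstep m).eq_wait_or_mem_of_wait with h | h
      · exact Or.inl h
      · exact Or.inr ⟨m, hm, h⟩
    · exact Or.inr hk

theorem exists_of_run (h0 : φ 0 = scan false false) (hacc : {n | φ n = done}.Infinite) :
    ∃ N : ℕ, ((∃ m ≤ N, (u m).2 ∈ F) ∧ ∀ m, (u m).2 ∈ B → m ≤ N) ∧
      ¬((∃ m ≤ N, (u m).1 ∈ F) ∧ ∀ m, (u m).1 ∈ B → m ≤ N) := by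
  obtain ⟨N, hN, hcommit⟩ : ∃ N, IsScan (φ N) ∧ ¬IsScan (φ (N + 1)) := by
    by_contra! h
    obtain ⟨m, hm⟩ := hacc.nonempty
    have hscan : IsScan (φ m) := Nat.rec (h0 ▸ trivial) h m
    rwa [hm] at hscan
  obtain ⟨f, f', hN⟩ := isScan_iff.mp hN
  obtain ⟨hF', hwait_or_clean⟩ := (hN ▸ hstep N).of_scan_of_not_isScan hcommit
  obtain ⟨hf, hf'⟩ := flags_of_run hstep h0 hN
  refine ⟨N, ⟨?_, fun m hm => ?_⟩, ?_⟩
  · rcases hF' with h | h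
    · obtain ⟨m, hm, hmF⟩ := hf'.mp h
      exact ⟨m, hm.le, hmF⟩
    · exact ⟨N, le_rfl, h⟩
  · by_contra hlt
    exact (not_isScan_of_run hstep hcommit m (by omega)).2 hm
  · rintro ⟨⟨m, hm, hmF⟩, hB⟩
    rcases hwait_or_clean with hwait | ⟨rfl, hx⟩
    · obtain ⟨m', hdone, hm'⟩ := hacc.exists_gt (N + 1)
      rcases wait_or_mem_of_run hstep hwait m' hm'.le with h | ⟨k, hk, hkB⟩
      · exact ValPhase.noConfusion (h.symm.trans hdone)
      · have := hB k hkB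
        omega
    · rcases hm.lt_or_eq with hlt | rfl
      · exact Bool.false_ne_true (hf.mpr ⟨m, hlt, hmF⟩)
      · exact hx hmF

end Run

section CommitRun

variable (B F) (u : ℕ → Q × Q) (N : ℕ)

/-- After committing at `N`, it is known by time `n` that the first run has value `> N`. -/
def Confirmed (n : ℕ) : Prop :=
  (∀ m ≤ N, (u m).1 ∉ F) ∨ ∃ k, N < k ∧ k < n ∧ (u k).1 ∈ B

noncomputable def commitRun (n : ℕ) : ValPhase :=
  if n ≤ N then scan (decide (∃ m < n, (u m).1 ∈ F)) (decide (∃ m < n, (u m).2 ∈ F))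
  else if Confirmed B F u N n then done else wait

lemma commitRun_zero : commitRun B F u N 0 = scan false false := by
  simp [commitRun]

variable {B F u N}

lemma confirmed_succ_iff {n : ℕ} (hn : N < n) :
    Confirmed B F u N (n + 1) ↔ Confirmed B F u N n ∨ (u n).1 ∈ B := by
  constructor
  · rintro (hclean | ⟨k, hk, hk', hkB⟩)
    · exact Or.inl (Or.inl hclean)
    · rcases (Nat.lt_succ_iff.mp hk').lt_or_eq with hlt | rfl
      · exact Or.inl (Or.inr ⟨k, hk, hlt, hkB⟩)
      · exact Or.inr hkB
  · rintro ((hclean | ⟨k, hk, hk', hkB⟩) | hnB)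
    · exact Or.inl hclean
    · exact Or.inr ⟨k, hk, by omega, hkB⟩
    · exact Or.inr ⟨n, hn, by omega, hnB⟩

lemma commitRun_step (h'F : ∃ m ≤ N, (u m).2 ∈ F) (h'B : ∀ m, (u m).2 ∈ B → m ≤ N) (n : ℕ) :
    Step B F (commitRun B F u N n) (u n) (commitRun B F u N (n + 1)) := by
  rcases lt_trichotomy n N with hn | rfl | hn
  · have hseen (P : ℕ → Prop) :
        decide (∃ m < n + 1, P m) = (decide (∃ m < n, P m) || decide (P n)) := by
      simp only [Nat.exists_lt_succ_right, Bool.decide_or]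
    rw [commitRun, commitRun, if_pos hn.le, if_pos (show n + 1 ≤ N from hn), hseen, hseen]
    exact .scan_scan _ _ _
  · have hF' : decide (∃ m < n, (u m).2 ∈ F) = true ∨ (u n).2 ∈ F := by
      obtain ⟨m, hm, hmF⟩ := h'F
      rcases hm.lt_or_eq with hlt | rfl
      · exact Or.inl (decide_eq_true ⟨m, hlt, hmF⟩)
      · exact Or.inr hmF
    rw [commitRun, commitRun, if_pos le_rfl, if_neg (show ¬n + 1 ≤ n by omega)]
    split_ifs with hdone
    · rcases hdone with hclean | ⟨k, hk, hk', -⟩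
      · rw [decide_eq_false fun ⟨m, hm, hmF⟩ => hclean m hm.le hmF]
        exact .scan_done _ _ hF' (hclean n le_rfl)
      · omega
    · exact .scan_wait _ _ _ hF'
  · have hB' : (u n).2 ∉ B := fun hb => absurd (h'B n hb) (by omega)
    rw [commitRun, commitRun, if_neg (show ¬n ≤ N by omega), if_neg (show ¬n + 1 ≤ N by omega),
      confirmed_succ_iff hn]
    by_cases hdone : Confirmed B F u N n
    · rw [if_pos hdone, if_pos (Or.inl hdone)]
      exact .done_done _ hB'
    by_cases hnB : (u n).1 ∈ B
    · rw [if_neg hdone, if_pos (Or.inr hnB)]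
      exact .wait_done _ hB' hnB
    · rw [if_neg hdone, if_neg (not_or.mpr ⟨hdone, hnB⟩)]
      exact .wait_wait _ hB'

lemma commitRun_infinite (h : ¬((∃ m ≤ N, (u m).1 ∈ F) ∧ ∀ m, (u m).1 ∈ B → m ≤ N)) :
    {n | commitRun B F u N n = done}.Infinite := by
  obtain ⟨M, hNM, hM⟩ : ∃ M ≥ N, ∀ n > M, Confirmed B F u N n := by
    by_cases hclean : ∀ m ≤ N, (u m).1 ∉ F
    · exact ⟨N, le_rfl, fun _ _ => Or.inl hclean⟩
    · push Not at hclean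
      obtain ⟨k, hkB, hk⟩ : ∃ k, (u k).1 ∈ B ∧ N < k := by
        by_contra! hB
        exact h ⟨hclean, hB⟩
      exact ⟨k, hk.le, fun n hn => Or.inr ⟨k, hk, hn, hkB⟩⟩
  refine Set.infinite_of_forall_exists_gt fun a => ⟨max a M + 1, ?_, by omega⟩
  change commitRun B F u N _ = done
  rw [commitRun, if_neg (by omega), if_pos (hM _ (by omega))]

end CommitRun

end ValPhase

def valLtNFA {Q : Type*} (B F : Set Q) : NFA (Q × Q) ValPhase where
  step s x := {t | ValPhase.Step B F s x t}
  start := {.scan false false}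
  accept := {.done}

theorem valLtNFA_buchiAccepts_iff {Q : Type*} (B F : Set Q) (u : ℕ → Q × Q) :
    (valLtNFA B F).BuchiAccepts u ↔
      runVal B F (fun n => (u n).2) < runVal B F (fun n => (u n).1) := by
  rw [runVal_lt_runVal_iff]
  constructor
  · rintro ⟨φ, h0, hstep, hacc⟩
    exact ValPhase.exists_of_run hstep h0 hacc
  · rintro ⟨N, ⟨h'F, h'B⟩, h⟩
    exact ⟨ValPhase.commitRun B F u N, ValPhase.commitRun_zero B F u N,
      ValPhase.commitRun_step h'F h'B, ValPhase.commitRun_infinite h⟩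

theorem val_comparison_omega_regular_general {Q σ : Type*} [Finite Q]
    (δ : Q → σ → Q) (q0 : Q) (B F : Set Q) :
    ∃ (Q' : Type) (_ : Fintype Q') (init : Set Q') (Δ : Q' → σ × σ → Set Q')
      (acc : Set Q'),
      ∀ w : ℕ → σ × σ,
        runVal B F (runOn δ q0 fun n => (w n).2) <
            runVal B F (runOn δ q0 fun n => (w n).1) ↔
          ∃ ρ : ℕ → Q', ρ 0 ∈ init ∧ (∀ n, ρ (n + 1) ∈ Δ (ρ n) (w n)) ∧
            {n | ρ n ∈ acc}.Infinite := by
  let M := (valLtNFA B F).onRun (fun (p : Q × Q) (a : σ × σ) => (δ p.1 a.1, δ p.2 a.2)) (q0, q0)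
  let e := Finite.equivFin ((Q × Q) × ValPhase)
  refine ⟨_, inferInstance, (M.reindex e).start, (M.reindex e).step, (M.reindex e).accept,
    fun w => ?_⟩
  change _ ↔ (M.reindex e).BuchiAccepts w
  rw [NFA.buchiAccepts_reindex, NFA.buchiAccepts_onRun_iff, valLtNFA_buchiAccepts_iff]
  simp only [runOn_prod]

/-- For a deterministic one-pair Rabin automaton `R`, the relation
`{(t,t') | val(run of R on t) > val(run of R on t')}` is ω-regular: it is
recognizable (reading the merge of `t` and `t'`) by a nondeterministic Büchi
automaton. -/
theorem val_comparison_omega_regular {Q σ : Type*} [Finite Q] [Finite σ]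
    (δ : Q → σ → Q) (q0 : Q) (B F : Set Q) :
    ∃ (Q' : Type) (_ : Fintype Q') (init : Set Q') (Δ : Q' → σ × σ → Set Q')
      (acc : Set Q'),
      ∀ w : ℕ → σ × σ,
        runVal B F (runOn δ q0 fun n => (w n).2) <
            runVal B F (runOn δ q0 fun n => (w n).1) ↔
          ∃ ρ : ℕ → Q', ρ 0 ∈ init ∧ (∀ n, ρ (n + 1) ∈ Δ (ρ n) (w n)) ∧
            {n | ρ n ∈ acc}.Infinite :=
  val_comparison_omega_regular_general δ q0 B F
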